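/- arXiv:2006.07452 — 3 statements merged into one kernel-verified Lean document; each statement's English description precedes it below -/
import Mathlib

section
/- Consider the recursion V_{k-1} = V_k + (r2 - r1 - r2*V_k)/(r2 - r1 - V_k) with terminal condition V_{K} = 0, parameters r1 >= 1 and 0 <= r2 < 1, iterated backward from k = K. Then the sequence W_n := V_{K-n} (value after n backward steps) is strictly increasing in n and nonnegative: W_0 = 0 and W_{n+1} > W_n >= 0 for all n >= 0. -/
section IncreasingOrbit

variable {α : Type*} [AddCommMonoid α] [PartialOrder α] [IsOrderedCancelAddMonoid α]

theorem nonneg_of_add_step_pos {f : α → α} (hf : ∀ x, 0 ≤ x → 0 < f x) {W : ℕ → α}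
    (h0 : 0 ≤ W 0) (hrec : ∀ n, W (n + 1) = W n + f (W n)) (n : ℕ) : 0 ≤ W n := by
  induction n with
  | zero => exact h0
  | succ k ih => rw [hrec k]; exact add_nonneg ih (hf _ ih).le

theorem lt_succ_of_add_step_pos {f : α → α} (hf : ∀ x, 0 ≤ x → 0 < f x) {W : ℕ → α}
    (h0 : 0 ≤ W 0) (hrec : ∀ n, W (n + 1) = W n + f (W n)) (n : ℕ) : W n < W (n + 1) := by
  rw [hrec n]
  exact lt_add_of_pos_right _ (hf _ (nonneg_of_add_step_pos hf h0 hrec n))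

end IncreasingOrbit

theorem backward_step_pos {r1 r2 w : ℝ} (hr : r2 < r1) (hr2 : 0 ≤ r2) (hw : 0 ≤ w) :
    0 < (r2 - r1 - r2 * w) / (r2 - r1 - w) :=
  div_pos_of_neg_of_neg (by linarith [mul_nonneg hr2 hw]) (by linarith)

/-- The backward value recursion `W_{n+1} = W_n + (r2 - r1 - r2 W_n)/(r2 - r1 - W_n)`
with `W_0 = 0`, `r1 ≥ 1 > r2 ≥ 0`, is strictly increasing and nonnegative. -/
theorem stmt_3 (r1 r2 : ℝ) (hr1 : 1 ≤ r1) (hr2 : 0 ≤ r2) (hr2' : r2 < 1)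
    (W : ℕ → ℝ) (h0 : W 0 = 0)
    (hrec : ∀ n, W (n + 1) = W n + (r2 - r1 - r2 * W n) / (r2 - r1 - W n)) :
    ∀ n, 0 ≤ W n ∧ W n < W (n + 1) := by
  have hstep : ∀ w : ℝ, 0 ≤ w → 0 < (r2 - r1 - r2 * w) / (r2 - r1 - w) :=
    fun _ hw => backward_step_pos (by linarith) hr2 hw
  intro n
  exact ⟨nonneg_of_add_step_pos hstep h0.ge hrec n, lt_succ_of_add_step_pos hstep h0.ge hrec n⟩
end

section
/- For r1 > 1 and r2 = 0, the backward recursion W_{n+1} = W_n + (r1)/(r1 + W_n), W_0 = 0, satisfies W_n <= sqrt(2*r1*n + r1^2) for all n >= 1. In particular W_n = O(sqrt(n)), i.e., for every c > 0 there exists N such that W_n <= c*n for all n >= N. -/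
/-- Sublinear (square-root) growth of the edge-game value when `r2 = 0`:
`W_n ≤ sqrt (2 r1 n + r1^2)` for `n ≥ 1`, hence `W_n ≤ c n` eventually for every `c > 0`. -/
theorem stmt_5 (r1 : ℝ) (hr1 : 1 < r1)
    (W : ℕ → ℝ) (h0 : W 0 = 0)
    (hrec : ∀ n, W (n + 1) = W n + r1 / (r1 + W n)) :
    (∀ n : ℕ, 1 ≤ n → W n ≤ Real.sqrt (2 * r1 * n + r1 ^ 2)) ∧
    (∀ c : ℝ, 0 < c → ∃ N : ℕ, ∀ n : ℕ, N ≤ n → W n ≤ c * n) := by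
  have hr0 : (0:ℝ) < r1 := by linarith
  have key : ∀ n : ℕ, 0 ≤ W n ∧ (W n)^2 ≤ 2 * r1 * n + r1 ^ 2 := by
    intro n
    induction n with
    | zero => simp [h0]; positivity
    | succ n ih =>
      obtain ⟨hWn, hWsq⟩ := ih
      have ha : (0:ℝ) < r1 + W n := by linarith
      have hq : r1 / (r1 + W n) * (r1 + W n) = r1 := div_mul_cancel₀ _ (ne_of_gt ha)
      have hqpos : 0 < r1 / (r1 + W n) := div_pos hr0 ha
      constructor
      · rw [hrec n]; linarith
      · rw [hrec n]
        have h2 : (W n + r1 / (r1 + W n))^2 ≤ (W n)^2 + 2 * r1 := by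
          nlinarith [mul_pos ha ha, sq_nonneg (r1 / (r1 + W n)), hq, hqpos]
        push_cast
        nlinarith
  have hbound : ∀ n : ℕ, 1 ≤ n → W n ≤ Real.sqrt (2 * r1 * n + r1 ^ 2) := by
    intro n _
    obtain ⟨hWn, hWsq⟩ := key n
    have := Real.sqrt_le_sqrt hWsq
    rwa [Real.sqrt_sq hWn] at this
  refine ⟨hbound, fun c hc => ?_⟩
  obtain ⟨N, hN⟩ := exists_nat_ge ((2 * r1 + r1 ^ 2) / c ^ 2)
  refine ⟨max N 1, fun n hn => ?_⟩
  have hn1 : 1 ≤ n := le_trans (le_max_right _ _) hn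
  have hnN : (N:ℝ) ≤ n := by exact_mod_cast le_trans (le_max_left _ _) hn
  have hnR : (1:ℝ) ≤ n := by exact_mod_cast hn1
  have hcn : (2 * r1 + r1 ^ 2) ≤ c ^ 2 * n := by
    have := hN.trans hnN
    rw [div_le_iff₀ (by positivity)] at this
    linarith [this]
  have h1 : 2 * r1 * n + r1 ^ 2 ≤ (c * n)^2 := by nlinarith
  calc W n ≤ Real.sqrt (2 * r1 * n + r1 ^ 2) := hbound n hn1
    _ ≤ Real.sqrt ((c * n)^2) := Real.sqrt_le_sqrt h1
    _ = c * n := Real.sqrt_sq (by positivity)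
end

section
/- Let r1 > 1 > r2 >= 0 and let (W_n) be given by W_0 = 0, W_{n+1} = W_n + r2 + (r1 - r2)(1 - r2)/(r1 - r2 + W_n). Then for all n >= 1: r2*n < W_n <= r2*n + sqrt(2*(r1 - r2)*(1 - r2)*n) + (r1 - r2). (The edge-game value equals the linear mobility term r2*n plus a sublinear correction of order sqrt(n).) -/
/-!
Subtracting the drift, `U n = W n - r2 n` grows by `c1 / (c2 + W n) ≤ c1 / (c2 + U n)`, where
`c1 = (r1 - r2)(1 - r2)` and `c2 = r1 - r2`. Since `c1 ≤ c2 ^ 2`, the map `u ↦ u + c1 / (c2 + u)` is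
monotone on `u ≥ 0`, so `U n ≤ √(2 c1 n) + c2` propagates by induction: one step of the map moves
`s + c2` to at most `√(s ^ 2 + 2 c1) + c2`, as for the continuous model `u' = c1 / u`.
-/

open Set

lemma monotoneOn_add_div_add {c₁ c₂ : ℝ} (hc₂ : 0 < c₂) (hc : c₁ ≤ c₂ ^ 2) :
    MonotoneOn (fun u : ℝ => u + c₁ / (c₂ + u)) (Ici 0) := by
  intro u (hu : 0 ≤ u) v (hv : 0 ≤ v) huv
  have hu' : 0 < c₂ + u := by linarith
  have hv' : 0 < c₂ + v := by linarith
  have hdiff : v + c₁ / (c₂ + v) - (u + c₁ / (c₂ + u)) =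
      (v - u) * ((c₂ + u) * (c₂ + v) - c₁) / ((c₂ + u) * (c₂ + v)) := by
    field_simp
    ring
  have hnum : 0 ≤ (v - u) * ((c₂ + u) * (c₂ + v) - c₁) :=
    mul_nonneg (by linarith) (by nlinarith)
  have := div_nonneg hnum (mul_pos hu' hv').le
  simp only
  linarith

lemma add_div_le_sqrt_add {c₁ c₂ s : ℝ} (hc₁ : 0 ≤ c₁) (hc₂ : 0 < c₂) (hc : c₁ ≤ c₂ ^ 2)
    (hs : 0 ≤ s) :
    s + c₁ / (s + 2 * c₂) ≤ √(s ^ 2 + 2 * c₁) := by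
  set s' := √(s ^ 2 + 2 * c₁)
  have hsq : s' ^ 2 = s ^ 2 + 2 * c₁ := Real.sq_sqrt (by positivity)
  have hs' : 0 ≤ s' := Real.sqrt_nonneg _
  have hle : s' ≤ s + 2 * c₂ := by nlinarith
  have hge : s ≤ s' := by nlinarith
  -- `c₁ = (s' - s)(s' + s) / 2` and `s' + s ≤ 2 (s + 2 c₂)`
  have : c₁ / (s + 2 * c₂) ≤ s' - s := by
    rw [div_le_iff₀ (by positivity)]
    nlinarith
  linarith

lemma le_sqrt_mul_add_of_le_add_div {c₁ c₂ : ℝ} (hc₁ : 0 ≤ c₁) (hc₂ : 0 < c₂)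
    (hc : c₁ ≤ c₂ ^ 2) {U : ℕ → ℝ} (hU : ∀ n, 0 ≤ U n) (hU₀ : U 0 ≤ c₂)
    (hstep : ∀ n, U (n + 1) ≤ U n + c₁ / (c₂ + U n)) (n : ℕ) :
    U n ≤ √(2 * c₁ * n) + c₂ := by
  induction n with
  | zero => simpa using hU₀
  | succ n ih =>
    set s := √(2 * c₁ * n)
    have hs : 0 ≤ s := Real.sqrt_nonneg _
    have hsq : s ^ 2 + 2 * c₁ = 2 * c₁ * ↑(n + 1) := by
      rw [Real.sq_sqrt (by positivity)]
      push_cast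
      ring
    have hmono := monotoneOn_add_div_add hc₂ hc (hU n) (by simp only [mem_Ici]; linarith) ih
    have hsqrt := add_div_le_sqrt_add hc₁ hc₂ hc hs
    rw [hsq] at hsqrt
    calc U (n + 1) ≤ U n + c₁ / (c₂ + U n) := hstep n
      _ ≤ s + c₂ + c₁ / (c₂ + (s + c₂)) := hmono
      _ = s + c₁ / (s + 2 * c₂) + c₂ := by ring_nf
      _ ≤ √(2 * c₁ * ↑(n + 1)) + c₂ := by linarith

section Recursion

variable {a b c : ℝ} {W : ℕ → ℝ} (h₀ : W 0 = 0)
  (hrec : ∀ n, W (n + 1) = W n + a + c / (b + W n))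
include h₀ hrec

lemma mul_le_of_rec (ha : 0 ≤ a) (hb : 0 < b) (hc : 0 ≤ c) (n : ℕ) : a * n ≤ W n := by
  induction n with
  | zero => simp [h₀]
  | succ n ih =>
    have hden : 0 < b + W n := by nlinarith [n.cast_nonneg (α := ℝ)]
    have := div_nonneg hc hden.le
    rw [hrec n]
    push_cast
    linarith

lemma mul_lt_of_rec (ha : 0 ≤ a) (hb : 0 < b) (hc : 0 < c) {n : ℕ} (hn : 1 ≤ n) :
    a * n < W n := by
  obtain ⟨m, rfl⟩ := Nat.exists_eq_add_of_le' hn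
  have hlow := mul_le_of_rec h₀ hrec ha hb hc.le m
  have hden : 0 < b + W m := by nlinarith [m.cast_nonneg (α := ℝ)]
  have := div_pos hc hden
  rw [hrec m]
  push_cast
  linarith

end Recursion

/-- Two-sided bound on the edge-game value: the linear mobility term `r2 n` plus a
sublinear square-root correction. -/
theorem stmt_19 (r1 r2 : ℝ) (hr1 : 1 < r1) (hr2 : 0 ≤ r2) (hr2' : r2 < 1)
    (W : ℕ → ℝ) (h0 : W 0 = 0)
    (hrec : ∀ n, W (n + 1) = W n + r2 + (r1 - r2) * (1 - r2) / (r1 - r2 + W n)) :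
    ∀ n : ℕ, 1 ≤ n →
      r2 * n < W n ∧
      W n ≤ r2 * n + Real.sqrt (2 * (r1 - r2) * (1 - r2) * n) + (r1 - r2) := by
  have hc₂ : 0 < r1 - r2 := by linarith
  have hc₁ : 0 < (r1 - r2) * (1 - r2) := mul_pos hc₂ (by linarith)
  have hc : (r1 - r2) * (1 - r2) ≤ (r1 - r2) ^ 2 := by nlinarith
  have hlow := mul_le_of_rec h0 hrec hr2 hc₂ hc₁.le
  have hstep : ∀ n, W (n + 1) - r2 * ↑(n + 1) ≤
      W n - r2 * n + (r1 - r2) * (1 - r2) / (r1 - r2 + (W n - r2 * n)) := by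
    intro n
    have hdrift : 0 ≤ r2 * n := by positivity
    have : (r1 - r2) * (1 - r2) / (r1 - r2 + W n) ≤
        (r1 - r2) * (1 - r2) / (r1 - r2 + (W n - r2 * n)) :=
      div_le_div_of_nonneg_left hc₁.le (by linarith [hlow n]) (by linarith)
    rw [hrec n]
    push_cast
    linarith
  have hup := le_sqrt_mul_add_of_le_add_div hc₁.le hc₂ hc (U := fun n => W n - r2 * n)
    (fun n => by linarith [hlow n]) (by simpa [h0] using hc₂.le) hstep
  intro n hn
  refine ⟨mul_lt_of_rec h0 hrec hr2 hc₂ hc₁ hn, ?_⟩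
  have := hup n
  rw [← mul_assoc] at this
  linarith
end
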